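/- (Correctness of the conditional Fork stabilizer test.) Let F be the star graph on four vertices {1,2,3,4} with edges {1,4}, {2,4}, {3,4}, and let |F⟩ be its graph state. For p, q, s ∈ ZMod 2 define |ψ(p,q,s)⟩ = Z₁^p Z₂^q Z₃^s |F⟩, and define the conditional observable O(p,s) = O₁ ⊗ O₂ ⊗ O₃ ⊗ O₄ where O₁ = Z if s = 0 and Y if s = 1; O₂ = Z if p = 0 and Y if p = 1; O₃ = Z if p = 0 and −Y if p = 1; O₄ = X if s = 0 and Y if s = 1. Then O(p,s) |ψ(p,q,s)⟩ = (−1)^{p·q} |ψ(p,q,s)⟩ for all p, q, s; hence measuring the four qubits in these bases yields outcomes m₁, m₂, m₃, m₄ with m₁ ⊕ m₂ ⊕ m₃ ⊕ m₄ = p·q with probability 1. -/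

import Mathlib

/-!
Each factor of `O(p,s)` is, up to a phase, a Pauli operator `Z^c X^t`, and
`O(p,s) = (-1)^s Z^c X^t` with `c = (1,1,1,s)`, `t = (s,p,p,1)`: the two `Y`s on qubits 1 and 4
contribute `(-i)² = -1`, while `Y` and `-Y` on qubits 2 and 3 cancel. A Pauli string `Z^c X^t`
acts on amplitudes by `ψ(x) ↦ (-1)^{c·x} ψ(x + t)`, and
`⟨x|ψ(p,q,s)⟩ ∝ (-1)^{r·x + x₄(x₁+x₂+x₃)}` with `r = (p,q,s,0)`. The eigenvalue equation
thus reduces to an identity between quadratic polynomials over `ZMod 2`, whose two sides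
differ by twice a polynomial.
-/

open Matrix
open scoped BigOperators

noncomputable section

/-- `(-1)^c` as a complex number, for `c : ZMod 2`. -/
def sgn (c : ZMod 2) : ℂ := if c = 0 then 1 else -1

/-- Pauli `X = !![0,1;1,0]`, indexed by `ZMod 2`. -/
def PX : Matrix (ZMod 2) (ZMod 2) ℂ := fun a b => if a = b then 0 else 1

/-- Pauli `Y = !![0,−i;i,0]`, indexed by `ZMod 2`. -/
def PY : Matrix (ZMod 2) (ZMod 2) ℂ :=
  fun a b => if a = b then 0 else if a = 0 then -Complex.I else Complex.I

/-- Pauli `Z = !![1,0;0,−1]`, indexed by `ZMod 2`. -/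
def PZ : Matrix (ZMod 2) (ZMod 2) ℂ := fun a b => if a = b then sgn a else 0

/-- The tensor (Kronecker) product over all qubits of a family of single-qubit
operators: the `(x, y)` entry is `∏ i, (f i) (x i) (y i)`. -/
def tensorOp {V : Type*} [Fintype V] (f : V → Matrix (ZMod 2) (ZMod 2) ℂ) :
    Matrix (V → ZMod 2) (V → ZMod 2) ℂ :=
  fun x y => ∏ i, f i (x i) (y i)

/-- The operator acting as `A` on qubit `i` and as the identity on all other qubits. -/
def localOp {V : Type*} [Fintype V] [DecidableEq V] (i : V)
    (A : Matrix (ZMod 2) (ZMod 2) ℂ) : Matrix (V → ZMod 2) (V → ZMod 2) ℂ :=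
  tensorOp (fun j => if j = i then A else 1)

/-- `Σ_{{i,j} ∈ E(G)} x_i x_j`, as an element of `ZMod 2`. -/
def edgePhase {V : Type*} [Fintype V] [DecidableEq V] (G : SimpleGraph V)
    [DecidableRel G.Adj] (x : V → ZMod 2) : ZMod 2 :=
  ∑ e ∈ G.edgeFinset, Sym2.lift ⟨fun i j => x i * x j, fun _ _ => mul_comm _ _⟩ e

/-- The graph state `|G⟩`, with amplitudes `⟨x|G⟩ = 2^{-n/2}·(−1)^{Σ_{{i,j}∈E(G)} x_i x_j}`. -/
def graphState {V : Type*} [Fintype V] [DecidableEq V] (G : SimpleGraph V)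
    [DecidableRel G.Adj] : (V → ZMod 2) → ℂ :=
  fun x => (Real.sqrt 2 : ℂ)⁻¹ ^ (Fintype.card V) * sgn (edgePhase G x)

/-- The entangling unitary `U_G = ∏_{{i,j} ∈ E(G)} CZ_{i,j}`: the diagonal matrix with
`(x,x)` entry `(−1)^{Σ_{{i,j}∈E(G)} x_i x_j}`. -/
def entangler {V : Type*} [Fintype V] [DecidableEq V] (G : SimpleGraph V)
    [DecidableRel G.Adj] : Matrix (V → ZMod 2) (V → ZMod 2) ℂ :=
  Matrix.diagonal (fun x => sgn (edgePhase G x))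

/-- The correlation operator `K_i = X_i ∏_{j ∈ N(i)} Z_j`. -/
def corrOp {V : Type*} [Fintype V] [DecidableEq V] (G : SimpleGraph V)
    [DecidableRel G.Adj] (i : V) : Matrix (V → ZMod 2) (V → ZMod 2) ℂ :=
  tensorOp (fun j => if j = i then PX else if G.Adj i j then PZ else 1)

/-- `Z^r = ∏_i Z_i^{r_i}` for `r ∈ (ZMod 2)^V`. -/
def Zop {V : Type*} [Fintype V] (r : V → ZMod 2) :
    Matrix (V → ZMod 2) (V → ZMod 2) ℂ :=
  tensorOp (fun i => PZ ^ (r i).val)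

/-- The rank-one outer product `|ψ⟩⟨ψ|`. -/
def outer {α : Type*} (ψ : α → ℂ) : Matrix α α ℂ := fun x y => ψ x * star (ψ y)


/-- The star graph on four vertices with center `3` (modeling the Fork region,
qubits 9,10,11,12 with center 12): edges `{0,3}, {1,3}, {2,3}`. -/
def forkGraph : SimpleGraph (Fin 4) := SimpleGraph.fromRel (fun _ j => j = 3)

instance : DecidableRel forkGraph.Adj := fun a b =>
  inferInstanceAs (Decidable (a ≠ b ∧ (b = 3 ∨ a = 3)))

lemma zmod_two_eq_zero_or_one (a : ZMod 2) : a = 0 ∨ a = 1 := by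
  revert a; decide

@[simp] lemma sgn_zero : sgn 0 = 1 := rfl

@[simp] lemma sgn_one : sgn 1 = -1 := if_neg one_ne_zero

lemma sgn_add (a b : ZMod 2) : sgn (a + b) = sgn a * sgn b := by
  rcases zmod_two_eq_zero_or_one a with rfl | rfl <;>
    rcases zmod_two_eq_zero_or_one b with rfl | rfl <;> simp [ZModModule.add_self]

lemma sgn_sum {ι : Type*} (s : Finset ι) (f : ι → ZMod 2) :
    sgn (∑ i ∈ s, f i) = ∏ i ∈ s, sgn (f i) := by
  classical
  induction s using Finset.induction_on with
  | empty => simp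
  | insert i s hi ih => rw [Finset.sum_insert hi, Finset.prod_insert hi, sgn_add, ih]

/-- The Pauli operator `Z^c X^t`. -/
def pauliZX (c t : ZMod 2) : Matrix (ZMod 2) (ZMod 2) ℂ :=
  fun a b => if b = a + t then sgn (c * a) else 0

lemma PX_eq_pauliZX : PX = pauliZX 0 1 := by
  ext a b
  rcases zmod_two_eq_zero_or_one a with rfl | rfl <;>
    rcases zmod_two_eq_zero_or_one b with rfl | rfl <;> simp [PX, pauliZX, ZModModule.add_self]

lemma PZ_eq_pauliZX : PZ = pauliZX 1 0 := by
  ext a b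
  rcases zmod_two_eq_zero_or_one a with rfl | rfl <;>
    rcases zmod_two_eq_zero_or_one b with rfl | rfl <;> simp [PZ, pauliZX]

lemma PY_eq_pauliZX : PY = -Complex.I • pauliZX 1 1 := by
  ext a b
  rcases zmod_two_eq_zero_or_one a with rfl | rfl <;>
    rcases zmod_two_eq_zero_or_one b with rfl | rfl <;> simp [PY, pauliZX, ZModModule.add_self]

lemma PZ_pow_val_eq_pauliZX (c : ZMod 2) : PZ ^ c.val = pauliZX c 0 := by
  rcases zmod_two_eq_zero_or_one c with rfl | rfl
  · ext a b
    simp [pauliZX, Matrix.one_apply, eq_comm]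
  · rw [show (1 : ZMod 2).val = 1 from rfl, pow_one, PZ_eq_pauliZX]

lemma tensorOp_smul {V : Type*} [Fintype V] (ε : V → ℂ)
    (f : V → Matrix (ZMod 2) (ZMod 2) ℂ) :
    tensorOp (fun i => ε i • f i) = (∏ i, ε i) • tensorOp f := by
  ext x y; simp [tensorOp, Finset.prod_mul_distrib]

lemma tensorOp_pauliZX_mulVec_apply {V : Type*} [Fintype V] [DecidableEq V] (c t : V → ZMod 2)
    (v : (V → ZMod 2) → ℂ) (x : V → ZMod 2) :
    ((tensorOp fun i => pauliZX (c i) (t i)) *ᵥ v) x = sgn (∑ i, c i * x i) * v (x + t) := by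
  have entry : ∀ y, tensorOp (fun i => pauliZX (c i) (t i)) x y
      = if y = x + t then sgn (∑ i, c i * x i) else 0 := by
    intro y
    simp only [tensorOp, pauliZX, Fintype.prod_ite_zero, sgn_sum, funext_iff, Pi.add_apply]
  simp [mulVec, dotProduct, entry]

lemma Zop_mulVec_apply {V : Type*} [Fintype V] [DecidableEq V] (r : V → ZMod 2)
    (v : (V → ZMod 2) → ℂ) (x : V → ZMod 2) :
    (Zop r *ᵥ v) x = sgn (∑ i, r i * x i) * v x := by
  simpa [Zop, PZ_pow_val_eq_pauliZX] using tensorOp_pauliZX_mulVec_apply r 0 v x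

lemma graphState_forkGraph_apply (x : Fin 4 → ZMod 2) :
    graphState forkGraph x = (Real.sqrt 2 : ℂ)⁻¹ ^ 4 * sgn (x 3 * (x 0 + x 1 + x 2)) := by
  have edgePhase_eq : ∀ x : Fin 4 → ZMod 2,
      edgePhase forkGraph x = x 3 * (x 0 + x 1 + x 2) := by decide
  simp [graphState, edgePhase_eq]

lemma fork_observable_eq (p s : ZMod 2) :
    tensorOp ![if s = 0 then PZ else PY, if p = 0 then PZ else PY,
      if p = 0 then PZ else -PY, if s = 0 then PX else PY]
      = sgn s • tensorOp (fun i => pauliZX (![1, 1, 1, s] i) (![s, p, p, 1] i)) := by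
  have factors : ![if s = 0 then PZ else PY, if p = 0 then PZ else PY,
      if p = 0 then PZ else -PY, if s = 0 then PX else PY]
      = fun i => ![if s = 0 then 1 else -Complex.I, if p = 0 then 1 else -Complex.I,
          if p = 0 then 1 else Complex.I, if s = 0 then 1 else -Complex.I] i •
        pauliZX (![1, 1, 1, s] i) (![s, p, p, 1] i) := by
    funext i
    fin_cases i <;> rcases zmod_two_eq_zero_or_one p with rfl | rfl <;>
      rcases zmod_two_eq_zero_or_one s with rfl | rfl <;>
      simp [PX_eq_pauliZX, PY_eq_pauliZX, PZ_eq_pauliZX]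
  rw [factors, tensorOp_smul, Fin.prod_univ_four]
  rcases zmod_two_eq_zero_or_one p with rfl | rfl <;>
    rcases zmod_two_eq_zero_or_one s with rfl | rfl <;> simp

lemma fork_phase_eq (p q s : ZMod 2) (x : Fin 4 → ZMod 2) :
    let c : Fin 4 → ZMod 2 := ![1, 1, 1, s]
    let r : Fin 4 → ZMod 2 := ![p, q, s, 0]
    let y := x + ![s, p, p, 1]
    s + ∑ i, c i * x i + ∑ i, r i * y i + y 3 * (y 0 + y 1 + y 2)
      = p * q + ∑ i, r i * x i + x 3 * (x 0 + x 1 + x 2) := by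
  simp only [Fin.sum_univ_four, Pi.add_apply, cons_val]
  grind

/-- Correctness of the conditional Fork stabilizer test: for the
phase-encoded star graph state `|ψ(p,q,s)⟩ = Z₁^p Z₂^q Z₃^s |F⟩`, the conditional
observable `O(p,s)` (with `O₁ = Z/Y` by `s`, `O₂ = Z/Y` by `p`, `O₃ = Z/(−Y)` by `p`,
`O₄ = X/Y` by `s`) satisfies `O(p,s)|ψ(p,q,s)⟩ = (−1)^{p·q} |ψ(p,q,s)⟩`; hence the
measurement outcomes satisfy `m₁ ⊕ m₂ ⊕ m₃ ⊕ m₄ = p·q` with probability 1. -/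
theorem fork_stabilizer_test (p q s : ZMod 2) :
    (tensorOp ![if s = 0 then PZ else PY,
                if p = 0 then PZ else PY,
                if p = 0 then PZ else -PY,
                if s = 0 then PX else PY]).mulVec
        ((Zop ![p, q, s, 0]).mulVec (graphState forkGraph))
      = sgn (p * q) • ((Zop ![p, q, s, 0]).mulVec (graphState forkGraph)) := by
  funext x
  have phase := congrArg sgn (fork_phase_eq p q s x)
  simp only [sgn_add] at phase
  rw [fork_observable_eq, smul_mulVec, Pi.smul_apply, smul_eq_mul,
    tensorOp_pauliZX_mulVec_apply, Zop_mulVec_apply, Pi.smul_apply, Zop_mulVec_apply,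
    graphState_forkGraph_apply, graphState_forkGraph_apply, smul_eq_mul]
  linear_combination (Real.sqrt 2 : ℂ)⁻¹ ^ 4 * phase
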